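/- arXiv:1211.5762 — 5 statements merged into one kernel-verified Lean document; each statement's English description precedes it below -/
import Mathlib

section
/- Let F : 𝒮 → 𝒯 be a map of algebraic theories and let F* : Alg(𝒯) → Alg(𝒮) be the functor that equips a 𝒯-algebra with the 𝒮-actions obtained by composing with F. If F* is an equivalence of categories, then every component F_n : 𝒮(n) → 𝒯(n) is a bijection, i.e. F is an isomorphism of algebraic theories. -/
open CategoryTheory Limits

/-- An algebraic theory (abstract clone / cartesian operad): sets of `n`-ary
operations with projections (variables) and substitution. Renaming along
`f : Fin n → Fin m` is derived as substitution along projections. -/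
structure AlgTheory where
  carrier : ℕ → Type
  pr : ∀ {n : ℕ}, Fin n → carrier n
  subst : ∀ {n m : ℕ}, carrier n → (Fin n → carrier m) → carrier m
  pr_subst : ∀ {n m : ℕ} (i : Fin n) (s : Fin n → carrier m), subst (pr i) s = s i
  subst_pr : ∀ {n : ℕ} (t : carrier n), subst t pr = t
  subst_assoc : ∀ {n m k : ℕ} (t : carrier n) (s : Fin n → carrier m) (r : Fin m → carrier k),
    subst (subst t s) r = subst t fun i => subst (s i) r

/-- Renaming (the functorial action on `Fin n`), derived from substitution. -/
def AlgTheory.rename (T : AlgTheory) {n m : ℕ} (f : Fin n → Fin m) (t : T.carrier n) :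
    T.carrier m :=
  T.subst t fun i => T.pr (f i)
/-- An algebra for an algebraic theory `T`: a set with an associative unital
action of `T`. -/
structure ThAlgebra (T : AlgTheory) where
  carrier : Type
  act : ∀ {n : ℕ}, T.carrier n → (Fin n → carrier) → carrier
  act_pr : ∀ {n : ℕ} (i : Fin n) (a : Fin n → carrier), act (T.pr i) a = a i
  act_subst : ∀ {n m : ℕ} (t : T.carrier n) (s : Fin n → T.carrier m) (a : Fin m → carrier),
    act (T.subst t s) a = act t fun i => act (s i) a

/-- Homomorphisms of `T`-algebras. -/
structure ThAlgebraHom {T : AlgTheory} (A B : ThAlgebra T) where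
  toFun : A.carrier → B.carrier
  map_act : ∀ {n : ℕ} (t : T.carrier n) (a : Fin n → A.carrier),
    toFun (A.act t a) = B.act t fun i => toFun (a i)

/-- Composition of algebra homomorphisms (diagrammatic order). -/
def ThAlgebraHom.comp {T : AlgTheory} {A B C : ThAlgebra T}
    (f : ThAlgebraHom A B) (g : ThAlgebraHom B C) : ThAlgebraHom A C where
  toFun a := g.toFun (f.toFun a)
  map_act t a := by show g.toFun (f.toFun _) = _; rw [f.map_act, g.map_act]

/-- `T.carrier n` is itself a `T`-algebra via substitution; it is the free
algebra on `n` generators (the projections). -/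
def AlgTheory.freeAlg (T : AlgTheory) (n : ℕ) : ThAlgebra T where
  carrier := T.carrier n
  act t s := T.subst t s
  act_pr i s := T.pr_subst i s
  act_subst t s a := T.subst_assoc t s a

/-- Renaming gives an algebra homomorphism between free algebras. -/
def AlgTheory.renameHom (T : AlgTheory) {n m : ℕ} (f : Fin n → Fin m) :
    ThAlgebraHom (T.freeAlg n) (T.freeAlg m) where
  toFun := T.rename f
  map_act t a := T.subst_assoc t a _
/-- The category `Alg(T)` of `T`-algebras. -/
instance algebraCategory (T : AlgTheory) : CategoryTheory.Category (ThAlgebra T) where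
  Hom A B := ThAlgebraHom A B
  id _ := { toFun := fun a => a, map_act := fun _ _ => rfl }
  comp f g := f.comp g
  id_comp _ := rfl
  comp_id _ := rfl
  assoc _ _ _ := rfl
/-- A map of algebraic theories: a family of maps preserving projections and
substitution (hence also renaming). -/
structure TheoryHom (S T : AlgTheory) where
  app : ∀ {n : ℕ}, S.carrier n → T.carrier n
  map_pr : ∀ {n : ℕ} (i : Fin n), app (S.pr i) = T.pr i
  map_subst : ∀ {n m : ℕ} (t : S.carrier n) (s : Fin n → S.carrier m),
    app (S.subst t s) = T.subst (app t) fun i => app (s i)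

/-- The functor `F* : Alg(T) → Alg(S)` induced by a map of theories
`F : S → T`, equipping a `T`-algebra with the composite `S`-actions. -/
def TheoryHom.pullback {S T : AlgTheory} (F : TheoryHom S T) :
    ThAlgebra T ⥤ ThAlgebra S where
  obj A :=
    { carrier := A.carrier
      act := fun t a => A.act (F.app t) a
      act_pr := by
        intro n i a
        show A.act (F.app (S.pr i)) a = a i
        rw [F.map_pr, A.act_pr]
      act_subst := by
        intro n m t s a
        show A.act (F.app (S.subst t s)) a = A.act (F.app t) fun i => A.act (F.app (s i)) a
        rw [F.map_subst, A.act_subst] }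
  map f := { toFun := f.toFun, map_act := fun t a => f.map_act (F.app t) a }
  map_id _ := rfl
  map_comp _ _ := rfl

/-!
Since `F` preserves substitution, `η = F_n : S(n) → F*(T(n))` is a homomorphism of
`S`-algebras. As `S(n)` and `T(n)` are free on the projections, which `F` preserves,
`h ↦ η ≫ F*(h)` identifies homomorphisms `T(n) → C` with homomorphisms `S(n) → F*(C)`:
both are `n`-tuples in `C`. When `F*` is an equivalence it is fully faithful and every
`S`-algebra is isomorphic to some `F*(C)`, so precomposition with `η` is bijective on
every hom-set, and `η` is an isomorphism by Yoneda.
-/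

lemma CategoryTheory.bijective_comp_iff_of_iso {C : Type*} [Category C] {X Y B B' : C}
    (f : X ⟶ Y) (e : B ≅ B') :
    (Function.Bijective fun g : Y ⟶ B => f ≫ g) ↔ Function.Bijective fun g : Y ⟶ B' => f ≫ g := by
  rw [← Equiv.comp_bijective _ ((Iso.refl X).homCongr e),
    ← Equiv.bijective_comp ((Iso.refl Y).homCongr e).symm]
  congr!
  funext g
  simp

namespace ThAlgebra

variable {T : AlgTheory} {A B : ThAlgebra T}

lemma hom_ext {f g : A ⟶ B} (h : f.toFun = g.toFun) : f = g := by
  obtain ⟨f, _⟩ : ThAlgebraHom A B := f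
  obtain ⟨g, _⟩ : ThAlgebraHom A B := g
  cases h; rfl

lemma bijective_of_isIso (f : A ⟶ B) [IsIso f] : Function.Bijective f.toFun :=
  Function.bijective_iff_has_inverse.2 ⟨(inv f).toFun,
    fun a => congrArg (ThAlgebraHom.toFun · a) (IsIso.hom_inv_id f),
    fun b => congrArg (ThAlgebraHom.toFun · b) (IsIso.inv_hom_id f)⟩

end ThAlgebra

namespace AlgTheory

variable (T : AlgTheory) {n : ℕ}

def freeAlgLift (B : ThAlgebra T) (b : Fin n → B.carrier) : T.freeAlg n ⟶ B where
  toFun t := B.act t b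
  map_act t a := B.act_subst t a b

def freeAlgHomEquiv (B : ThAlgebra T) : (T.freeAlg n ⟶ B) ≃ (Fin n → B.carrier) where
  toFun h i := h.toFun (T.pr i)
  invFun := T.freeAlgLift B
  left_inv h := by
    refine ThAlgebra.hom_ext (funext fun t => ?_)
    change B.act t _ = h.toFun t
    conv_rhs => rw [← T.subst_pr t]
    exact (h.map_act t T.pr).symm
  right_inv b := funext fun i => B.act_pr i b

end AlgTheory

namespace TheoryHom

variable {S T : AlgTheory} (F : TheoryHom S T) (n : ℕ)

def freeAlgUnit : S.freeAlg n ⟶ F.pullback.obj (T.freeAlg n) where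
  toFun := F.app
  map_act t a := F.map_subst t a

lemma freeAlgHomEquiv_freeAlgUnit_comp_map {C : ThAlgebra T} (h : T.freeAlg n ⟶ C) :
    S.freeAlgHomEquiv _ (F.freeAlgUnit n ≫ F.pullback.map h) = T.freeAlgHomEquiv C h :=
  funext fun i => congrArg h.toFun (F.map_pr i)

lemma bijective_freeAlgUnit_comp_map (C : ThAlgebra T) :
    Function.Bijective fun h : T.freeAlg n ⟶ C => F.freeAlgUnit n ≫ F.pullback.map h := by
  have hfun : (fun h : T.freeAlg n ⟶ C => F.freeAlgUnit n ≫ F.pullback.map h) =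
      (S.freeAlgHomEquiv _).symm ∘ T.freeAlgHomEquiv C := by
    funext h
    exact (Equiv.eq_symm_apply _).2 (F.freeAlgHomEquiv_freeAlgUnit_comp_map n h)
  rw [hfun]
  exact (S.freeAlgHomEquiv _).symm.bijective.comp (T.freeAlgHomEquiv C).bijective

lemma bijective_freeAlgUnit_comp_of_fullyFaithful (hF : F.pullback.FullyFaithful)
    (C : ThAlgebra T) :
    Function.Bijective fun g : F.pullback.obj (T.freeAlg n) ⟶ F.pullback.obj C =>
      F.freeAlgUnit n ≫ g :=
  (Function.Bijective.of_comp_iff _ (hF.map_bijective _ _)).1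
    (F.bijective_freeAlgUnit_comp_map n C)

instance isIso_freeAlgUnit [F.pullback.IsEquivalence] : IsIso (F.freeAlgUnit n) :=
  isIso_of_coyoneda_map_bijective _ fun B =>
    (bijective_comp_iff_of_iso _ (F.pullback.objObjPreimageIso B)).1 <|
      F.bijective_freeAlgUnit_comp_of_fullyFaithful n (.ofFullyFaithful _) _

end TheoryHom

/-- if the functor `F* : Alg(T) → Alg(S)` induced by a map of
algebraic theories `F : S → T` is an equivalence of categories, then every
component `F_n : S(n) → T(n)` is a bijection, i.e. `F` is an isomorphism of
algebraic theories. -/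
theorem theoryHom_iso_of_pullback_equivalence {S T : AlgTheory} (F : TheoryHom S T)
    (h : F.pullback.IsEquivalence) :
    ∀ n : ℕ, Function.Bijective (fun t : S.carrier n => F.app t) :=
  fun n => ThAlgebra.bijective_of_isIso (F.freeAlgUnit n)
end

section
/- Let 𝒯 be an algebraic theory, X a presheaf over 𝒯, and p ∈ ℕ. The presheaf m ↦ X(m+p), with renaming and action affecting only the first m variables and leaving the last p variables undisturbed, together with the evaluation map given by substitution, is an exponential object 𝒯^p ⇒ X in the category P𝒯. -/
open CategoryTheory Limits

/-- A presheaf over an algebraic theory `T`: a family of sets with a compatible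
right action of `T` (renaming is derived, acting by projections). -/
structure ThPresheaf (T : AlgTheory) where
  obj : ℕ → Type
  act : ∀ {m n : ℕ}, obj m → (Fin m → T.carrier n) → obj n
  act_pr : ∀ {m : ℕ} (x : obj m), act x T.pr = x
  act_subst : ∀ {m n k : ℕ} (x : obj m) (s : Fin m → T.carrier n) (r : Fin n → T.carrier k),
    act (act x s) r = act x fun i => T.subst (s i) r

/-- Maps of presheaves over `T`. -/
structure ThPresheafHom {T : AlgTheory} (X Y : ThPresheaf T) where
  toFun : ∀ n, X.obj n → Y.obj n
  map_act : ∀ {m n : ℕ} (x : X.obj m) (s : Fin m → T.carrier n),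
    toFun n (X.act x s) = Y.act (toFun m x) s

@[ext] theorem ThPresheafHom.ext {T : AlgTheory} {X Y : ThPresheaf T}
    {f g : ThPresheafHom X Y} (h : ∀ n x, f.toFun n x = g.toFun n x) : f = g := by
  cases f; cases g
  congr 1
  funext n x
  exact h n x

/-- Composition of presheaf maps (diagrammatic order). -/
def ThPresheafHom.comp {T : AlgTheory} {X Y Z : ThPresheaf T}
    (f : ThPresheafHom X Y) (g : ThPresheafHom Y Z) : ThPresheafHom X Z where
  toFun n x := g.toFun n (f.toFun n x)
  map_act x s := by
    show g.toFun _ (f.toFun _ (X.act x s)) = _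
    rw [f.map_act, g.map_act]

/-- The universal presheaf: `T` acting on itself on the right. -/
def AlgTheory.univ (T : AlgTheory) : ThPresheaf T where
  obj := T.carrier
  act x s := T.subst x s
  act_pr := T.subst_pr
  act_subst := T.subst_assoc

/-- The finite power `T^p` of the universal presheaf. -/
def AlgTheory.pow (T : AlgTheory) (p : ℕ) : ThPresheaf T where
  obj n := Fin p → T.carrier n
  act x s := fun j => T.subst (x j) s
  act_pr x := funext fun j => T.subst_pr (x j)
  act_subst x s r := funext fun j => T.subst_assoc (x j) s r

/-- Extension of a substitution tuple `s : T(n)^m` to `T(n+p)^(m+p)`, leaving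
the last `p` variables undisturbed. -/
def AlgTheory.extendSub (T : AlgTheory) {p m n : ℕ} (s : Fin m → T.carrier n) :
    Fin (m + p) → T.carrier (n + p) :=
  Fin.addCases (fun i => T.rename (Fin.castAdd p) (s i)) fun j => T.pr (Fin.natAdd n j)

theorem AlgTheory.extendSub_pr (T : AlgTheory) {p m : ℕ} :
    (T.extendSub (p := p) fun i : Fin m => T.pr i) = fun i => T.pr i := by
  funext i
  refine Fin.addCases (fun j => ?_) (fun j => ?_) i <;>
    simp [AlgTheory.extendSub, AlgTheory.rename, T.pr_subst]

theorem AlgTheory.extendSub_comp (T : AlgTheory) {p m n k : ℕ}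
    (s : Fin m → T.carrier n) (r : Fin n → T.carrier k) :
    (fun i => T.subst (T.extendSub (p := p) s i) (T.extendSub (p := p) r)) =
      T.extendSub (p := p) fun i => T.subst (s i) r := by
  funext i
  refine Fin.addCases (fun j => ?_) (fun j => ?_) i <;>
    simp [AlgTheory.extendSub, AlgTheory.rename, T.pr_subst, T.subst_assoc]

/-- The function-space presheaf `T^p ⇒ X`: at level `m` it is `X(m+p)`, with
the action affecting only the first `m` variables. -/
def ThPresheaf.exp {T : AlgTheory} (X : ThPresheaf T) (p : ℕ) : ThPresheaf T where
  obj m := X.obj (m + p)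
  act x s := X.act x (T.extendSub s)
  act_pr x := by
    show X.act x (T.extendSub T.pr) = x
    rw [show T.extendSub (p := p) T.pr = T.pr from T.extendSub_pr, X.act_pr]
  act_subst x s r := by
    show X.act (X.act x (T.extendSub s)) (T.extendSub r) =
      X.act x (T.extendSub fun i => T.subst (s i) r)
    rw [X.act_subst, T.extendSub_comp]

/-- The pointwise (categorical) product of presheaves. -/
def ThPresheaf.prod {T : AlgTheory} (X Y : ThPresheaf T) : ThPresheaf T where
  obj n := X.obj n × Y.obj n
  act x s := (X.act x.1 s, Y.act x.2 s)
  act_pr x := by cases x with | mk a b => simp [X.act_pr, Y.act_pr]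
  act_subst x s r := by cases x with | mk a b => simp [X.act_subst, Y.act_subst]

/-- The tuple `(pr₁, …, pr_n, c₁, …, c_p)`. -/
def glueSub (T : AlgTheory) {p n : ℕ} (c : Fin p → T.carrier n) :
    Fin (n + p) → T.carrier n :=
  Fin.addCases (fun i => T.pr i) c

/-- Evaluation `(T^p ⇒ X) × T^p → X`, given by substitution. -/
def evalHom {T : AlgTheory} (X : ThPresheaf T) (p : ℕ) :
    ThPresheafHom ((X.exp p).prod (T.pow p)) X where
  toFun n x := X.act x.1 (glueSub T x.2)
  map_act := by
    intro m n x s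
    obtain ⟨a, c⟩ : X.obj (m + p) × (Fin p → T.carrier m) := x
    show X.act (X.act a (T.extendSub s)) (glueSub T fun j => T.subst (c j) s) =
      X.act (X.act a (glueSub T c)) s
    rw [X.act_subst, X.act_subst]
    congr 1
    funext i
    refine Fin.addCases (fun j => ?_) (fun j => ?_) i <;>
      simp [AlgTheory.extendSub, glueSub, AlgTheory.rename, T.pr_subst, T.subst_assoc,
        T.subst_pr]

/-! The curried form of `g : Y × T^p → X` evaluates `g` on `y` weakened to `n + p` variables,
paired with the `p` fresh variables; uniqueness holds because substituting
`(pr₁, …, pr_n, c)` into this generic instance recovers any `(y, c)`. -/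

namespace AlgTheory

variable (T : AlgTheory)

@[simp]
theorem rename_eq_subst {n m : ℕ} (f : Fin n → Fin m) (t : T.carrier n) :
    T.rename f t = T.subst t fun i => T.pr (f i) :=
  rfl

@[simp]
theorem extendSub_castAdd {p m n : ℕ} (s : Fin m → T.carrier n) (i : Fin m) :
    T.extendSub (p := p) s (Fin.castAdd p i) = T.rename (Fin.castAdd p) (s i) :=
  Fin.addCases_left i

@[simp]
theorem extendSub_natAdd {p m n : ℕ} (s : Fin m → T.carrier n) (j : Fin p) :
    T.extendSub (p := p) s (Fin.natAdd m j) = T.pr (Fin.natAdd n j) :=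
  Fin.addCases_right j

@[simp]
theorem glueSub_castAdd {p n : ℕ} (c : Fin p → T.carrier n) (i : Fin n) :
    glueSub T c (Fin.castAdd p i) = T.pr i :=
  Fin.addCases_left i

@[simp]
theorem glueSub_natAdd {p n : ℕ} (c : Fin p → T.carrier n) (j : Fin p) :
    glueSub T c (Fin.natAdd n j) = c j :=
  Fin.addCases_right j

def weakenSub (p n : ℕ) : Fin n → T.carrier (n + p) :=
  fun i => T.pr (Fin.castAdd p i)

def freshSub (p n : ℕ) : Fin p → T.carrier (n + p) :=
  fun j => T.pr (Fin.natAdd n j)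

theorem subst_weakenSub_glueSub {p n : ℕ} (c : Fin p → T.carrier n) :
    (fun i => T.subst (T.weakenSub p n i) (glueSub T c)) = T.pr := by
  funext i
  simp [weakenSub, T.pr_subst]

theorem subst_freshSub_glueSub {p n : ℕ} (c : Fin p → T.carrier n) :
    (fun j => T.subst (T.freshSub p n j) (glueSub T c)) = c := by
  funext j
  simp [freshSub, T.pr_subst]

theorem subst_weakenSub_extendSub {p m n : ℕ} (s : Fin m → T.carrier n) :
    (fun i => T.subst (T.weakenSub p m i) (T.extendSub s)) =
      fun i => T.subst (s i) (T.weakenSub p n) := by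
  funext i
  simp only [weakenSub, extendSub_castAdd, rename_eq_subst, T.pr_subst]
  rfl

theorem subst_freshSub_extendSub {p m n : ℕ} (s : Fin m → T.carrier n) :
    (fun j => T.subst (T.freshSub p m j) (T.extendSub s)) = T.freshSub p n := by
  funext j
  simp [freshSub, T.pr_subst]

theorem subst_extendSub_weakenSub_glueSub_freshSub (p n : ℕ) :
    (fun i => T.subst (T.extendSub (p := p) (T.weakenSub p n) i) (glueSub T (T.freshSub p n))) =
      T.pr := by
  funext i
  refine Fin.addCases (fun j => ?_) (fun j => ?_) i <;>
    simp [weakenSub, freshSub, T.pr_subst]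

end AlgTheory

open AlgTheory

section Currying

variable {T : AlgTheory} {X Y : ThPresheaf T} {p : ℕ}

theorem evalHom_exp_act_weakenSub_freshSub {n : ℕ} (x : X.obj (n + p)) :
    (evalHom X p).toFun (n + p) ((X.exp p).act x (T.weakenSub p n), T.freshSub p n) = x :=
  calc X.act (X.act x (T.extendSub (T.weakenSub p n))) (glueSub T (T.freshSub p n))
      _ = X.act x T.pr := by rw [X.act_subst, subst_extendSub_weakenSub_glueSub_freshSub]
      _ = x := X.act_pr x

def curryHom (g : ThPresheafHom (Y.prod (T.pow p)) X) : ThPresheafHom Y (X.exp p) where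
  toFun n y := g.toFun (n + p) (Y.act y (T.weakenSub p n), T.freshSub p n)
  map_act {m n} y s :=
    calc g.toFun (n + p) (Y.act (Y.act y s) (T.weakenSub p n), T.freshSub p n)
      _ = g.toFun (n + p) ((Y.prod (T.pow p)).act
            (Y.act y (T.weakenSub p m), T.freshSub p m) (T.extendSub s)) := by
        congr 1
        refine Prod.ext ?_ (T.subst_freshSub_extendSub s).symm
        show _ = Y.act (Y.act y _) _
        rw [Y.act_subst, Y.act_subst, subst_weakenSub_extendSub]
      _ = _ := g.map_act _ _

theorem evalHom_curryHom (g : ThPresheafHom (Y.prod (T.pow p)) X) (n : ℕ) (y : Y.obj n)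
    (c : Fin p → T.carrier n) :
    (evalHom X p).toFun n ((curryHom g).toFun n y, c) = g.toFun n (y, c) :=
  calc X.act (g.toFun (n + p) (Y.act y (T.weakenSub p n), T.freshSub p n)) (glueSub T c)
      _ = g.toFun n ((Y.prod (T.pow p)).act
            (Y.act y (T.weakenSub p n), T.freshSub p n) (glueSub T c)) := (g.map_act _ _).symm
      _ = g.toFun n (y, c) := by
        congr 1
        refine Prod.ext ?_ (T.subst_freshSub_glueSub c)
        show Y.act (Y.act y _) _ = y
        rw [Y.act_subst, subst_weakenSub_glueSub, Y.act_pr]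

theorem eq_curryHom_of_evalHom {g : ThPresheafHom (Y.prod (T.pow p)) X}
    {h : ThPresheafHom Y (X.exp p)}
    (hg : ∀ (n : ℕ) (y : Y.obj n) (c : Fin p → T.carrier n),
      (evalHom X p).toFun n (h.toFun n y, c) = g.toFun n (y, c)) :
    h = curryHom g := by
  ext n y
  refine (evalHom_exp_act_weakenSub_freshSub (h.toFun n y)).symm.trans ?_
  rw [← h.map_act]
  exact hg _ _ _

end Currying

/-- the presheaf `m ↦ X(m+p)`, with action leaving the last `p`
variables undisturbed and evaluation given by substitution, is an exponential
object `T^p ⇒ X` in `PT`: maps `Y × T^p → X` correspond uniquely to maps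
`Y → (T^p ⇒ X)` via evaluation. -/
theorem exp_is_exponential (T : AlgTheory) (X : ThPresheaf T) (p : ℕ)
    (Y : ThPresheaf T) (g : ThPresheafHom (Y.prod (T.pow p)) X) :
    ∃! h : ThPresheafHom Y (X.exp p),
      ∀ (n : ℕ) (y : Y.obj n) (c : Fin p → T.carrier n),
        (evalHom X p).toFun n (h.toFun n y, c) = g.toFun n (y, c) :=
  ⟨curryHom g, evalHom_curryHom g, fun _ => eq_curryHom_of_evalHom⟩
end

section
/- Let ℒ and ℳ be λ-theories and let F : ℒ → ℳ be a map of the underlying algebraic theories such that F(app) = app and F(𝕒) = 𝕒. Then F commutes with all the retractions ρ_n and sections λ_n, i.e. F is a map of λ-theories. -/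
open CategoryTheory Limits

/-- Given a substitution tuple `s : T(m)^n`, the tuple
`s⁺ : T(m+1)^(n+1)` consisting of the components of `s` weakened along
`Fin m ↪ Fin (m+1)` followed by the last projection. -/
def AlgTheory.lift (T : AlgTheory) {n m : ℕ} (s : Fin n → T.carrier m) :
    Fin (n + 1) → T.carrier (m + 1) :=
  Fin.lastCases (T.pr (Fin.last m)) fun i => T.rename Fin.castSucc (s i)

/-- A λ-theory: an algebraic theory with semi-closed structure, i.e. natural
retractions of `ℒ(n)` onto `ℒ(n+1)` (retraction `ρ`, section `λ` = `abs`),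
compatible with substitution. -/
structure LambdaTheory extends AlgTheory where
  rho : ∀ {n : ℕ}, carrier n → carrier (n + 1)
  abs : ∀ {n : ℕ}, carrier (n + 1) → carrier n
  rho_abs : ∀ {n : ℕ} (u : carrier (n + 1)), rho (abs u) = u
  rho_subst : ∀ {n m : ℕ} (t : carrier n) (s : Fin n → carrier m),
    subst (rho t) (AlgTheory.lift toAlgTheory s) = rho (subst t s)
  abs_subst : ∀ {n m : ℕ} (u : carrier (n + 1)) (s : Fin n → carrier m),
    subst (abs u) s = abs (subst u (AlgTheory.lift toAlgTheory s))

/-- The binary application operation `app = ρ(pr₁) ∈ ℒ(2)`. -/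
def LambdaTheory.appOp (L : LambdaTheory) : L.carrier 2 := L.rho (L.pr 0)

/-- The constant `𝕒 = λ(λ(app)) ∈ ℒ(0)`. -/
def LambdaTheory.appConst (L : LambdaTheory) : L.carrier 0 := L.abs (L.abs L.appOp)
/-! Since `app = ρ(x₁)`, the naturality of `ρ` gives `ρ t = app⟨t⁺⟩`, so a map preserving `app`
(and, like every map of algebraic theories, the lifting `s ↦ s⁺`) preserves `ρ`. Likewise `λ (ρ t)`
is the substitution of `t` into `λ app = ρ 𝕒`, so a map preserving `𝕒` commutes with `λ ∘ ρ`;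
finally `λ u = λ (ρ (λ u))`. -/

lemma LambdaTheory.subst_appOp_lift (L : LambdaTheory) {n : ℕ} (t : L.carrier n) :
    L.subst L.appOp (L.lift fun _ : Fin 1 => t) = L.rho t := by
  rw [LambdaTheory.appOp, L.rho_subst, L.pr_subst]

lemma LambdaTheory.abs_rho_eq_subst (L : LambdaTheory) {n : ℕ} (t : L.carrier n) :
    L.abs (L.rho t) = L.subst (L.abs L.appOp) fun _ : Fin 1 => t := by
  rw [L.abs_subst, L.subst_appOp_lift]

lemma LambdaTheory.abs_appOp_eq_rho_appConst (L : LambdaTheory) :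
    L.abs L.appOp = L.rho L.appConst := by
  rw [LambdaTheory.appConst, L.rho_abs]

namespace TheoryHom

lemma map_lift {S T : AlgTheory} (F : TheoryHom S T) {n m : ℕ} (s : Fin n → S.carrier m) :
    (fun i => F.app (S.lift s i)) = T.lift fun j => F.app (s j) := by
  funext i
  induction i using Fin.lastCases with
  | last => simp [AlgTheory.lift, F.map_pr]
  | cast i => simp [AlgTheory.lift, AlgTheory.rename, F.map_subst, F.map_pr]

variable {L M : LambdaTheory} (F : TheoryHom L.toAlgTheory M.toAlgTheory)

lemma map_rho_of_map_appOp (happ : F.app L.appOp = M.appOp) {n : ℕ} (t : L.carrier n) :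
    F.app (L.rho t) = M.rho (F.app t) := by
  rw [← L.subst_appOp_lift, F.map_subst, happ, F.map_lift, M.subst_appOp_lift]

lemma map_abs_appOp (happ : F.app L.appOp = M.appOp) (haconst : F.app L.appConst = M.appConst) :
    F.app (L.abs L.appOp) = M.abs M.appOp := by
  rw [L.abs_appOp_eq_rho_appConst, F.map_rho_of_map_appOp happ, haconst,
    M.abs_appOp_eq_rho_appConst]

lemma map_abs_rho (happ : F.app L.appOp = M.appOp) (haconst : F.app L.appConst = M.appConst)
    {n : ℕ} (t : L.carrier n) : F.app (L.abs (L.rho t)) = M.abs (M.rho (F.app t)) := by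
  rw [L.abs_rho_eq_subst, F.map_subst, F.map_abs_appOp happ haconst, M.abs_rho_eq_subst]

lemma map_abs (happ : F.app L.appOp = M.appOp) (haconst : F.app L.appConst = M.appConst)
    {n : ℕ} (u : L.carrier (n + 1)) : F.app (L.abs u) = M.abs (F.app u) := by
  conv_lhs => rw [← L.rho_abs u]
  rw [F.map_abs_rho happ haconst, ← F.map_rho_of_map_appOp happ, L.rho_abs]

end TheoryHom

/-- a map of the underlying algebraic theories of λ-theories which
preserves the binary application `app` and the constant `𝕒` commutes with all
retractions `ρ` and sections `λ`, i.e. it is a map of λ-theories. -/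
theorem theoryHom_is_lambdaHom (L M : LambdaTheory)
    (F : TheoryHom L.toAlgTheory M.toAlgTheory)
    (happ : F.app L.appOp = M.appOp) (haconst : F.app L.appConst = M.appConst) :
    (∀ {n : ℕ} (t : L.carrier n), F.app (L.rho t) = M.rho (F.app t)) ∧
    (∀ {n : ℕ} (u : L.carrier (n + 1)), F.app (L.abs u) = M.abs (F.app u)) :=
  ⟨F.map_rho_of_map_appOp happ, F.map_abs happ haconst⟩
end

section
/- In any λ-theory ℒ, for every n and every s ∈ ℒ(n), writing ŝ = λ^n(s) ∈ ℒ(0) for the result of applying the sections λ n times, one has s = app_n⟨(w(ŝ), pr_1, …, pr_n)⟩, where w(ŝ) ∈ ℒ(n) is ŝ weakened by renaming to n variables and app_n = ρ^n(pr_1) ∈ ℒ(n+1) is the n-fold iterated application. -/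
open CategoryTheory Limits

/-- Iterated retraction: `ρⁿ(pr₁) ∈ ℒ(n+1)` is the `n`-fold iterated
application `app_n`. -/
def LambdaTheory.rhoIter (L : LambdaTheory) : ∀ n : ℕ, L.carrier 1 → L.carrier (n + 1)
  | 0, t => t
  | n + 1, t => L.rho (L.rhoIter n t)

/-- Iterated section: `λⁿ(s) ∈ ℒ(0)` for `s ∈ ℒ(n)`. -/
def LambdaTheory.absIter (L : LambdaTheory) : ∀ {n : ℕ}, L.carrier n → L.carrier 0
  | 0, t => t
  | _ + 1, t => L.absIter (L.abs t)

/-!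
Induction on `n`. For `n = 0` the claim is `s = pr₁⟨s⟩`. For the step write
`s = ρ(λ s)` and apply the induction hypothesis to `λ s ∈ ℒ(n)`, whose iterated
abstraction is again `ŝ`: compatibility of `ρ` with substitution moves `ρ` onto
`app_n`, and lifting the tuple `(w(ŝ), pr₁, …, pr_n)` to `n + 1` variables yields
`(w(ŝ), pr₁, …, pr_{n+1})`.
-/

namespace AlgTheory

variable (T : AlgTheory)

lemma rename_rename {n m k : ℕ} (f : Fin n → Fin m) (g : Fin m → Fin k) (t : T.carrier n) :
    T.rename g (T.rename f t) = T.rename (g ∘ f) t := by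
  simp only [rename, T.subst_assoc, T.pr_subst, Function.comp_apply]

lemma rename_pr {n m : ℕ} (f : Fin n → Fin m) (i : Fin n) :
    T.rename f (T.pr i) = T.pr (f i) :=
  T.pr_subst i _

lemma rename_id {n : ℕ} (t : T.carrier n) : T.rename id t = t :=
  T.subst_pr t

/-- The tuple `(w(c), pr₁, …, pr_n) ∈ T(n)^(n+1)` for a constant `c ∈ T(0)`. -/
def weakenCons (n : ℕ) (c : T.carrier 0) : Fin (n + 1) → T.carrier n :=
  Fin.cases (T.rename Fin.elim0 c) fun i => T.pr i

lemma lift_weakenCons (n : ℕ) (c : T.carrier 0) :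
    T.lift (T.weakenCons n c) = T.weakenCons (n + 1) c := by
  funext j
  refine Fin.lastCases ?_ (fun i => ?_) j
  · rw [lift, Fin.lastCases_last, weakenCons, ← Fin.succ_last, Fin.cases_succ]
  · rw [lift, Fin.lastCases_castSucc]
    refine Fin.cases ?_ (fun i => ?_) i
    · simp only [weakenCons, Fin.cases_zero, Fin.castSucc_zero, rename_rename]
      congr 1
      exact Subsingleton.elim _ _
    · rw [weakenCons, Fin.cases_succ, rename_pr, ← Fin.succ_castSucc, weakenCons,
        Fin.cases_succ]

end AlgTheory

namespace LambdaTheory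

variable (L : LambdaTheory)

lemma eq_subst_rhoIter_weakenCons_absIter {n : ℕ} (s : L.carrier n) :
    s = L.subst (L.rhoIter n (L.pr 0)) (L.weakenCons n (L.absIter s)) := by
  induction n with
  | zero =>
    have weaken_eq : L.rename Fin.elim0 s = s := by
      rw [show (Fin.elim0 : Fin 0 → Fin 0) = id from Subsingleton.elim _ _, L.rename_id]
    exact (L.pr_subst 0 _).trans weaken_eq |>.symm
  | succ n ih =>
    calc s = L.rho (L.abs s) := (L.rho_abs s).symm
      _ = L.rho (L.subst (L.rhoIter n (L.pr 0)) (L.weakenCons n (L.absIter s))) :=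
        congrArg L.rho (ih (L.abs s))
      _ = L.subst (L.rhoIter (n + 1) (L.pr 0)) (L.weakenCons (n + 1) (L.absIter s)) := by
        rw [← L.lift_weakenCons]
        exact (L.rho_subst _ _).symm

end LambdaTheory

/-- in any λ-theory, every `s ∈ ℒ(n)` is recovered from its
iterated abstraction `ŝ = λⁿ(s) ∈ ℒ(0)` by substituting the weakening of `ŝ`
together with the projections into the iterated application
`app_n = ρⁿ(pr₁) ∈ ℒ(n+1)`. -/
theorem abstraction_recovery (L : LambdaTheory) (n : ℕ) (s : L.carrier n) :
    s = L.subst (L.rhoIter n (L.pr 0))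
          (Fin.cases (L.toAlgTheory.rename Fin.elim0 (L.absIter s)) fun i => L.pr i) :=
  L.eq_subst_rhoIter_weakenCons_absIter s
end

section
/- Let ℒ be a λ-theory and Mℒ the monoid with underlying set ℒ(1), multiplication t · s = t⟨s⟩ and unit pr_1. The functor from the category Pℒ of presheaves over ℒ to the category of right Mℒ-sets, sending a presheaf X to the set X(1) with right action x · t = x⟨t⟩ (for x ∈ X(1), t ∈ ℒ(1)) and a presheaf map to its component at 1, is an equivalence of categories. -/
open CategoryTheory Limits

/-- The category `P T` of presheaves over an algebraic theory `T`. -/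
instance presheafCategory (T : AlgTheory) : CategoryTheory.Category (ThPresheaf T) where
  Hom X Y := ThPresheafHom X Y
  id _ := { toFun := fun _ x => x, map_act := fun _ _ => rfl }
  comp f g := f.comp g
  id_comp _ := rfl
  comp_id _ := rfl
  assoc _ _ _ := rfl
/-- A right `M`-set: a set with an associative unital right action of the
monoid `M`. -/
structure RAct (M : Type) [Monoid M] where
  carrier : Type
  act : carrier → M → carrier
  act_one : ∀ x, act x 1 = x
  act_mul : ∀ (x : carrier) (a b : M), act (act x a) b = act x (a * b)

/-- Equivariant maps of right `M`-sets. -/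
structure RActHom {M : Type} [Monoid M] (X Y : RAct M) where
  toFun : X.carrier → Y.carrier
  map_act : ∀ (x : X.carrier) (a : M), toFun (X.act x a) = Y.act (toFun x) a

/-- The category of right `M`-sets. -/
instance ractCategory (M : Type) [Monoid M] : CategoryTheory.Category (RAct M) where
  Hom X Y := RActHom X Y
  id _ := { toFun := fun x => x, map_act := fun _ _ => rfl }
  comp f g :=
    { toFun := fun x => g.toFun (f.toFun x)
      map_act := fun x a => by
        show g.toFun (f.toFun _) = _
        rw [f.map_act, g.map_act] }
  id_comp _ := rfl
  comp_id _ := rfl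
  assoc _ _ _ := rfl

/-- The monoid `Mℒ = ℒ(1)` with substitution as multiplication and the
projection (variable) as unit. -/
instance monoidM (L : LambdaTheory) : Monoid (L.carrier 1) where
  mul t s := L.subst t fun _ => s
  one := L.pr 0
  mul_assoc a b c := by
    show L.subst (L.subst a fun _ => b) (fun _ => c) =
      L.subst a fun _ => L.subst b fun _ => c
    rw [L.subst_assoc]
  one_mul a := L.pr_subst 0 fun _ => a
  mul_one a := by
    show L.subst a (fun _ => L.pr 0) = a
    have : (fun _ : Fin 1 => L.pr (0 : Fin 1)) = L.pr := by
      funext i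
      rw [Subsingleton.elim i 0]
    rw [this, L.subst_pr]

theorem fin_one_tuple {α : Type} (f : Fin 1 → α) : f = fun _ => f 0 := by
  funext i
  rw [Subsingleton.elim i 0]

/-- The functor from presheaves over `ℒ` to right `ℒ(1)`-sets sending `X` to
`X(1)` with the action by substitution, and a presheaf map to its component
at `1`. -/
def evalAtOne (L : LambdaTheory) : ThPresheaf L.toAlgTheory ⥤ RAct (L.carrier 1) where
  obj X :=
    { carrier := X.obj 1
      act := fun x t => X.act x fun _ => t
      act_one := fun x => by
        show X.act x (fun _ => L.pr 0) = x
        have : (fun _ : Fin 1 => L.pr (0 : Fin 1)) = L.pr := by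
          funext i
          rw [Subsingleton.elim i 0]
        rw [this, X.act_pr]
      act_mul := fun x a b => by
        show X.act (X.act x fun _ => a) (fun _ => b) = X.act x fun _ => a * b
        rw [X.act_subst]; rfl }
  map φ :=
    { toFun := φ.toFun 1
      map_act := fun x a => φ.map_act x fun _ => a }
  map_id _ := rfl
  map_comp _ _ := rfl


/-!
Every arity `n` of a λ-theory is a retract of `1`: the Church tuple `tuple n = λf. f x₀ … xₙ₋₁`
in `ℒ(n)` and the selectors `selector n i = z (λy₀ … yₙ₋₁. yᵢ)` in `ℒ(1)` satisfy
`(selector n i)⟨tuple n⟩ = xᵢ`. Hence a presheaf `X` is determined by `X(1)`, since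
`x = x⟨selector n⟩⟨tuple n⟩` for `x ∈ X(n)`; this makes evaluation at `1` fully faithful.
A right `ℒ(1)`-set `A` is recovered as `X(1)` of the presheaf `n ↦ Hom(ℒ(1)ⁿ, A)` of
equivariant maps, by the Yoneda lemma for monoid actions.
-/

namespace LambdaTheory

variable (L : LambdaTheory)

def ap {m : ℕ} (a b : L.carrier m) : L.carrier m := L.subst L.appOp ![a, b]

theorem subst_ap {m k : ℕ} (a b : L.carrier m) (r : Fin m → L.carrier k) :
    L.subst (L.ap a b) r = L.ap (L.subst a r) (L.subst b r) := by
  rw [ap, ap, L.subst_assoc]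
  congr 1
  funext i
  fin_cases i <;> simp

theorem subst_rho {n m : ℕ} (a : L.carrier n) (s : Fin (n + 1) → L.carrier m) :
    L.subst (L.rho a) s = L.ap (L.subst a fun i => s i.castSucc) (s (Fin.last n)) := by
  have hrho : L.rho a = L.subst L.appOp (L.toAlgTheory.lift fun _ : Fin 1 => a) := by
    conv_lhs => rw [← L.pr_subst 0 fun _ : Fin 1 => a, ← L.rho_subst]
    rfl
  rw [hrho, L.subst_assoc, ap]
  congr 1
  funext j
  fin_cases j
  · change L.subst (L.subst a _) s = _
    rw [L.subst_assoc]
    simp only [L.pr_subst]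
    rfl
  · change L.subst (L.pr (Fin.last n)) s = _
    rw [L.pr_subst]
    rfl

/-- The β-law in substitution form. -/
theorem subst_snoc {n m : ℕ} (u : L.carrier (n + 1)) (σ : Fin n → L.carrier m)
    (t : L.carrier m) :
    L.subst u (Fin.snoc σ t) = L.ap (L.subst (L.abs u) σ) t := by
  conv_lhs => rw [← L.rho_abs u]
  rw [subst_rho]
  simp

theorem ap_abs {n : ℕ} (u : L.carrier (n + 1)) (t : L.carrier n) :
    L.ap (L.abs u) t = L.subst u (Fin.snoc L.pr t) := by
  rw [subst_snoc, L.subst_pr]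

def cl {m : ℕ} (c : L.carrier 0) : L.carrier m := L.subst c Fin.elim0

theorem subst_cl {m k : ℕ} (c : L.carrier 0) (r : Fin m → L.carrier k) :
    L.subst (L.cl c) r = L.cl c := by
  rw [cl, cl, L.subst_assoc]
  congr 1
  funext i
  exact i.elim0

/-- `t x₀ … xₙ₋₁` -/
def apps {m : ℕ} (t : L.carrier m) : ∀ {n : ℕ}, (Fin n → L.carrier m) → L.carrier m
  | 0, _ => t
  | n + 1, x => L.ap (apps t (Fin.init x)) (x (Fin.last n))

theorem subst_apps {m k : ℕ} (t : L.carrier m) (r : Fin m → L.carrier k) :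
    ∀ {n : ℕ} (x : Fin n → L.carrier m),
      L.subst (L.apps t x) r = L.apps (L.subst t r) fun i => L.subst (x i) r
  | 0, _ => rfl
  | n + 1, x => by
    rw [apps, apps, subst_ap, subst_apps t r (Fin.init x)]
    rfl

/-- `λx₀ … xₙ₋₁. t` -/
def absAll : ∀ {n : ℕ}, L.carrier n → L.carrier 0
  | 0, t => t
  | _ + 1, t => absAll (L.abs t)

theorem apps_cl_absAll : ∀ {n m : ℕ} (t : L.carrier n) (x : Fin n → L.carrier m),
    L.apps (L.cl (L.absAll t)) x = L.subst t x
  | 0, _, t, x => by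
    change L.subst t Fin.elim0 = L.subst t x
    rw [Subsingleton.elim x Fin.elim0]
  | n + 1, _, t, x => by
    rw [apps, absAll, apps_cl_absAll, ← subst_snoc, Fin.snoc_init_self]

def tuple (n : ℕ) : L.carrier n :=
  L.abs (L.apps (L.pr (Fin.last n)) fun i => L.pr i.castSucc)

def selector (n : ℕ) (i : Fin n) : L.carrier 1 :=
  L.ap (L.pr 0) (L.cl (L.absAll (L.pr i)))

theorem selector_subst_tuple (n : ℕ) (i : Fin n) :
    L.subst (L.selector n i) (fun _ => L.tuple n) = L.pr i := by
  rw [selector, subst_ap, L.pr_subst, subst_cl, tuple, ap_abs, subst_apps, L.pr_subst]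
  simp only [Fin.snoc_last, L.pr_subst, Fin.snoc_castSucc]
  rw [apps_cl_absAll, L.subst_pr]

end LambdaTheory

@[ext] theorem RAct.hom_ext {M : Type} [Monoid M] {X Y : RAct M} {f g : X ⟶ Y}
    (h : ∀ x, f.toFun x = g.toFun x) : f = g := by
  obtain ⟨f, _⟩ := f
  obtain ⟨g, _⟩ := g
  congr
  exact funext h

def AlgTheory.powMap (T : AlgTheory) {m n : ℕ} (s : Fin m → T.carrier n) : T.pow n ⟶ T.pow m where
  toFun _ r i := T.subst (s i) r
  map_act r q := funext fun i => (T.subst_assoc (s i) r q).symm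

theorem AlgTheory.powMap_pr (T : AlgTheory) (n : ℕ) : T.powMap (T.pr (n := n)) = 𝟙 (T.pow n) :=
  ThPresheafHom.ext fun _ r => funext fun i => T.pr_subst i r

theorem AlgTheory.powMap_subst (T : AlgTheory) {m n k : ℕ} (s : Fin m → T.carrier n)
    (r : Fin n → T.carrier k) :
    T.powMap (fun i => T.subst (s i) r) = T.powMap r ≫ T.powMap s :=
  ThPresheafHom.ext fun _ q => funext fun i => T.subst_assoc (s i) r q

namespace ThPresheaf

variable {L : LambdaTheory} (X : ThPresheaf L.toAlgTheory)

/-- Every action on `X(n)` factors through `X(1)`. -/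
theorem act_eq_act_selector {n k : ℕ} (x : X.obj n) (w : Fin n → L.carrier k) :
    X.act x w = X.act (X.act x (L.selector n)) fun _ => L.subst (L.tuple n) w := by
  rw [X.act_subst]
  congr 1
  funext i
  rw [← L.subst_assoc, L.selector_subst_tuple, L.pr_subst]

theorem act_selector_tuple {n : ℕ} (x : X.obj n) :
    X.act (X.act x (L.selector n)) (fun _ => L.tuple n) = x := by
  simpa only [X.act_pr, L.subst_pr] using (X.act_eq_act_selector x L.pr).symm

end ThPresheaf

section EvalAtOne

variable {L : LambdaTheory} {X Y : ThPresheaf L.toAlgTheory}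

theorem ThPresheafHom.toFun_eq_act (φ : X ⟶ Y) {n : ℕ} (x : X.obj n) :
    φ.toFun n x = Y.act (φ.toFun 1 (X.act x (L.selector n))) fun _ => L.tuple n := by
  conv_lhs => rw [← X.act_selector_tuple x]
  exact φ.map_act _ _

theorem toFun_act_eq_act_act (g : (evalAtOne L).obj X ⟶ (evalAtOne L).obj Y) {n : ℕ}
    (x : X.obj n) (w : Fin n → L.carrier 1) :
    g.toFun (X.act x w) = Y.act (Y.act (g.toFun (X.act x (L.selector n))) fun _ => L.tuple n) w := by
  rw [X.act_eq_act_selector x w]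
  exact (g.map_act _ _).trans (Y.act_subst _ _ _).symm

def homOfEvalAtOne (g : (evalAtOne L).obj X ⟶ (evalAtOne L).obj Y) : X ⟶ Y where
  toFun n x := Y.act (g.toFun (X.act x (L.selector n))) fun _ => L.tuple n
  map_act {m n} x s := by
    rw [X.act_subst, toFun_act_eq_act_act, ← Y.act_subst, Y.act_selector_tuple]

theorem evalAtOne_map_homOfEvalAtOne (g : (evalAtOne L).obj X ⟶ (evalAtOne L).obj Y) :
    (evalAtOne L).map (homOfEvalAtOne g) = g := by
  ext x
  exact (Y.act_pr _).symm.trans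
    ((toFun_act_eq_act_act g x L.pr).symm.trans (congrArg g.toFun (X.act_pr x)))

end EvalAtOne

theorem evalAtOne_faithful (L : LambdaTheory) : (evalAtOne L).Faithful where
  map_injective {X Y} φ ψ h := ThPresheafHom.ext fun n x => by
    have h1 : φ.toFun 1 = ψ.toFun 1 := congrArg RActHom.toFun h
    rw [φ.toFun_eq_act, ψ.toFun_eq_act, h1]

theorem evalAtOne_full (L : LambdaTheory) : (evalAtOne L).Full where
  map_surjective g := ⟨homOfEvalAtOne g, evalAtOne_map_homOfEvalAtOne g⟩

namespace LambdaTheory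

variable (L : LambdaTheory)

/-- `n ↦ Hom(ℒ(1)ⁿ, A)`, where `(evalAtOne L).obj (L.pow n)` is the free right `ℒ(1)`-set `ℒ(1)ⁿ`. -/
def presheafOfRAct (A : RAct (L.carrier 1)) : ThPresheaf L.toAlgTheory where
  obj n := (evalAtOne L).obj (L.pow n) ⟶ A
  act φ s := (evalAtOne L).map (L.powMap s) ≫ φ
  act_pr φ := by
    rw [AlgTheory.powMap_pr, (evalAtOne L).map_id, Category.id_comp]
  act_subst φ s r := by
    rw [AlgTheory.powMap_subst, (evalAtOne L).map_comp, Category.assoc]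

def evalAtOnePresheafOfRActIso (A : RAct (L.carrier 1)) :
    (evalAtOne L).obj (L.presheafOfRAct A) ≅ A where
  hom :=
    { toFun := fun φ => φ.toFun L.pr
      map_act := fun φ t => by
        refine (congrArg φ.toFun ?_).trans (φ.map_act L.pr t)
        funext j
        exact (L.subst_pr t).trans (L.pr_subst j fun _ => t).symm }
  inv :=
    { toFun := fun a =>
        { toFun := fun r => A.act a (r 0)
          map_act := fun r t => (A.act_mul a (r 0) t).symm }
      map_act := fun a t => by
        refine RAct.hom_ext fun r => ?_
        refine (A.act_mul a t (r 0)).trans (congrArg (A.act a) ?_)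
        exact congrArg (L.subst t) (fin_one_tuple (α := L.carrier 1) r).symm }
  hom_inv_id := by
    ext φ
    refine RAct.hom_ext fun r => ?_
    refine (φ.map_act L.pr (r 0)).symm.trans (congrArg φ.toFun ?_)
    change (fun j => L.subst (L.pr j) fun _ => r 0) = r
    simp only [L.pr_subst]
    exact (fin_one_tuple r).symm
  inv_hom_id := by
    ext a
    exact A.act_one a

end LambdaTheory

theorem evalAtOne_essSurj (L : LambdaTheory) : (evalAtOne L).EssSurj where
  mem_essImage A := ⟨L.presheafOfRAct A, ⟨L.evalAtOnePresheafOfRActIso A⟩⟩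

/-- STATEMENT 14: the functor `X ↦ X(1)` from presheaves over a λ-theory `ℒ`
to right `ℒ(1)`-sets is an equivalence of categories. -/
theorem evalAtOne_isEquivalence (L : LambdaTheory) : (evalAtOne L).IsEquivalence :=
  { faithful := evalAtOne_faithful L
    full := evalAtOne_full L
    essSurj := evalAtOne_essSurj L }
end
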